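/- Define A_ℓ = ∑_{b₁,…,b_ℓ ≥ 2} 2^{ℓ − (b₁+⋯+b_ℓ)} · [[b₁,…,b_ℓ]]^L for ℓ ≥ 1 and A₀ = 0, where L ≥ 1 is a fixed integer and the sum is over all ℓ-tuples of integers ≥ 2. Then each A_ℓ converges absolutely, 0 ≤ A_ℓ ≤ 1, and the sequence (A_ℓ) is strictly increasing in ℓ for ℓ ≥ 1. -/

import Mathlib

open scoped BigOperators

/-- Finite semi-regular continued fraction `[[b₁,…,b_m]] = 1/(b₁ - [[b₂,…,b_m]])`,
with the empty continued fraction equal to `0` (so `[[b]] = 1/b`). -/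
noncomputable def srcf : List ℝ → ℝ
  | [] => 0
  | b :: t => 1 / (b - srcf t)

/-- `Aseq L ℓ = ∑_{b₁,…,b_ℓ ≥ 2} 2^{ℓ-(b₁+⋯+b_ℓ)} [[b₁,…,b_ℓ]]^L` (with `Aseq L 0 = 0`). -/
noncomputable def Aseq (L ℓ : ℕ) : ℝ :=
  ∑' b : Fin ℓ → {n : ℕ // 2 ≤ n},
    (2 : ℝ) ^ ((ℓ : ℤ) - ∑ i, ((b i : ℕ) : ℤ)) *
      (srcf (List.ofFn fun i => ((b i : ℕ) : ℝ))) ^ L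

/-!
Put the weight `w(n) = 2^{1-n}` on integers `n ≥ 2`; it has total mass `1`, and
`2^{ℓ - ∑ bᵢ} = ∏ w(bᵢ)`, so `A_ℓ` is the mean of `[[b₁,…,b_ℓ]]^L` over words of
i.i.d. letters of law `w`. For letters `≥ 2` the continued fraction lies in `[0, 1)`,
which gives convergence and `0 ≤ A_ℓ ≤ 1`.
Appending a letter strictly increases the continued fraction, because each level
`x ↦ 1/(b - x)` is increasing; as the extra letter carries total mass `1`,
`A_{ℓ+1} - A_ℓ` is the mean of the strictly positive increments.
-/

open Finset

theorem zpow_sum₀ {ι G₀ : Type*} [CommGroupWithZero G₀] {a : G₀} (ha : a ≠ 0) (s : Finset ι)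
    (f : ι → ℤ) : a ^ (∑ i ∈ s, f i) = ∏ i ∈ s, a ^ f i := by
  induction s using Finset.cons_induction with
  | empty => simp
  | cons i s hi ih => rw [sum_cons, prod_cons, zpow_add₀ ha, ih]

theorem Fin.prod_comp_snocEquiv {α M : Type*} [CommMonoid M] (w : α → M) {n : ℕ}
    (p : α × (Fin n → α)) :
    ∏ i, w (Fin.snocEquiv (fun _ => α) p i) = w p.1 * ∏ i, w (p.2 i) := by
  rw [Fin.prod_univ_castSucc, mul_comm]
  simp

theorem List.ofFn_snoc {α : Type*} {n : ℕ} (b : Fin n → α) (c : α) :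
    List.ofFn (Fin.snoc (α := fun _ => α) b c) = List.ofFn b ++ [c] := by
  rw [List.ofFn_succ']
  simp

section WordMean

variable {α : Type*}

noncomputable def wordMean (w : α → ℝ) (g : List α → ℝ) (ℓ : ℕ) : ℝ :=
  ∑' b : Fin ℓ → α, (∏ i, w (b i)) * g (List.ofFn b)

variable {w : α → ℝ}

theorem hasSum_prod_fin_pi (hw0 : ∀ a, 0 ≤ w a) {s : ℝ} (hw : HasSum w s) (ℓ : ℕ) :
    HasSum (fun b : Fin ℓ → α => ∏ i, w (b i)) (s ^ ℓ) := by
  induction ℓ with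
  | zero => simp
  | succ ℓ ih =>
    rw [← (Fin.snocEquiv fun _ => α).hasSum_iff, pow_succ']
    have hprod := hw.mul ih <| Summable.mul_of_nonneg (g := fun b : Fin ℓ → α => ∏ i, w (b i))
      hw.summable ih.summable hw0 fun b => prod_nonneg fun i _ => hw0 (b i)
    have hsnoc : (fun b : Fin (ℓ + 1) → α => ∏ i, w (b i)) ∘ Fin.snocEquiv (fun _ => α) =
        fun p : α × (Fin ℓ → α) => w p.1 * ∏ i, w (p.2 i) := by
      ext p
      exact Fin.prod_comp_snocEquiv w p
    rwa [hsnoc]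

theorem summable_wordMean (hw0 : ∀ a, 0 ≤ w a) (hw : HasSum w 1) {g : List α → ℝ}
    (hg : ∀ l, g l ∈ Set.Icc 0 1) (ℓ : ℕ) :
    Summable fun b : Fin ℓ → α => (∏ i, w (b i)) * g (List.ofFn b) :=
  (hasSum_prod_fin_pi hw0 hw ℓ).summable.of_nonneg_of_le
    (fun b => mul_nonneg (prod_nonneg fun i _ => hw0 (b i)) (hg _).1)
    (fun b => mul_le_of_le_one_right (prod_nonneg fun i _ => hw0 (b i)) (hg _).2)

theorem wordMean_mem_Icc (hw0 : ∀ a, 0 ≤ w a) (hw : HasSum w 1) {g : List α → ℝ}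
    (hg : ∀ l, g l ∈ Set.Icc 0 1) (ℓ : ℕ) : wordMean w g ℓ ∈ Set.Icc 0 1 := by
  refine ⟨tsum_nonneg fun b => mul_nonneg (prod_nonneg fun i _ => hw0 (b i)) (hg _).1, ?_⟩
  calc wordMean w g ℓ ≤ ∑' b : Fin ℓ → α, ∏ i, w (b i) :=
        (summable_wordMean hw0 hw hg ℓ).tsum_le_tsum
          (fun b => mul_le_of_le_one_right (prod_nonneg fun i _ => hw0 (b i)) (hg _).2)
          (hasSum_prod_fin_pi hw0 hw ℓ).summable
    _ = 1 := by rw [(hasSum_prod_fin_pi hw0 hw ℓ).tsum_eq, one_pow]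

theorem wordMean_lt_wordMean_succ [Nonempty α] (hw0 : ∀ a, 0 < w a) (hw : HasSum w 1)
    {g : List α → ℝ} (hg : ∀ l, g l ∈ Set.Icc 0 1) (hlt : ∀ l c, g l < g (l ++ [c])) (ℓ : ℕ) :
    wordMean w g ℓ < wordMean w g (ℓ + 1) := by
  have hw0' : ∀ a, 0 ≤ w a := fun a => (hw0 a).le
  let e := Fin.snocEquiv fun _ : Fin (ℓ + 1) => α
  have hS := summable_wordMean hw0' hw hg ℓ
  -- the extra letter has total mass `1`, so it can be added to the shorter words for free
  have hshort : HasSum (fun p : α × (Fin ℓ → α) => w p.1 * ((∏ i, w (p.2 i)) * g (List.ofFn p.2)))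
      (wordMean w g ℓ) := by
    rw [wordMean]
    simpa using hw.mul hS.hasSum <| Summable.mul_of_nonneg
      (g := fun b : Fin ℓ → α => (∏ i, w (b i)) * g (List.ofFn b)) hw.summable hS hw0'
      fun b => mul_nonneg (prod_nonneg fun i _ => hw0' (b i)) (hg _).1
  have hlong : HasSum
      (fun p : α × (Fin ℓ → α) => w p.1 * ((∏ i, w (p.2 i)) * g (List.ofFn p.2 ++ [p.1])))
      (wordMean w g (ℓ + 1)) := by
    rw [wordMean]
    have h := (summable_wordMean hw0' hw hg (ℓ + 1)).hasSum
    rw [← e.hasSum_iff] at h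
    convert h using 2 with p
    have hword : List.ofFn (e p) = List.ofFn p.2 ++ [p.1] := List.ofFn_snoc p.2 p.1
    rw [Function.comp_apply, Fin.prod_comp_snocEquiv, mul_assoc, hword]
  have hpt : ∀ p : α × (Fin ℓ → α), w p.1 * ((∏ i, w (p.2 i)) * g (List.ofFn p.2)) <
      w p.1 * ((∏ i, w (p.2 i)) * g (List.ofFn p.2 ++ [p.1])) := fun p =>
    mul_lt_mul_of_pos_left (mul_lt_mul_of_pos_left (hlt _ p.1)
      (prod_pos fun i _ => hw0 (p.2 i))) (hw0 p.1)
  exact hasSum_lt (fun p => (hpt p).le) (hpt (Classical.arbitrary _)) hshort hlong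

end WordMean

theorem srcf_mem_Ico {l : List ℝ} (hl : ∀ x ∈ l, 2 ≤ x) : srcf l ∈ Set.Ico 0 1 := by
  induction l with
  | nil => simp [srcf]
  | cons b t ih =>
    have hb : 2 ≤ b := hl b List.mem_cons_self
    have ht := ih fun x hx => hl x (List.mem_cons_of_mem _ hx)
    have hden : 1 < b - srcf t := by linarith [ht.2]
    rw [srcf]
    exact ⟨by positivity, by rw [div_lt_one (by linarith)]; exact hden⟩

theorem srcf_lt_srcf_append_singleton {l : List ℝ} (hl : ∀ x ∈ l, 2 ≤ x) {c : ℝ} (hc : 2 ≤ c) :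
    srcf l < srcf (l ++ [c]) := by
  induction l with
  | nil => simp only [srcf, List.nil_append, sub_zero]; positivity
  | cons b t ih =>
    have hb : 2 ≤ b := hl b List.mem_cons_self
    have ht : ∀ x ∈ t, 2 ≤ x := fun x hx => hl x (List.mem_cons_of_mem _ hx)
    have htc : ∀ x ∈ t ++ [c], 2 ≤ x := by simpa [or_imp, forall_and, hc] using ht
    have hlt_one := (srcf_mem_Ico htc).2
    rw [List.cons_append, srcf, srcf]
    exact one_div_lt_one_div_of_lt (by linarith) (by linarith [ih ht])

theorem two_zpow_sub_sum_eq_prod {ℓ : ℕ} (b : Fin ℓ → ℕ) :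
    (2 : ℝ) ^ ((ℓ : ℤ) - ∑ i, (b i : ℤ)) = ∏ i, (2 : ℝ) ^ (1 - (b i : ℤ)) := by
  rw [← zpow_sum₀ two_ne_zero, sum_sub_distrib]
  simp

noncomputable def letterWeight (n : {n : ℕ // 2 ≤ n}) : ℝ := 2 ^ (1 - (n : ℤ))

theorem letterWeight_pos (n : {n : ℕ // 2 ≤ n}) : 0 < letterWeight n := by
  unfold letterWeight
  positivity

theorem hasSum_letterWeight : HasSum letterWeight 1 := by
  let e : ℕ ≃ {n : ℕ // 2 ≤ n} :=
    ⟨fun m => ⟨m + 2, by omega⟩, fun n => n - 2, fun m => by simp, fun n => by ext; simp; omega⟩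
  rw [← e.hasSum_iff]
  convert hasSum_geometric_two' 1 using 1
  ext m
  simp only [Function.comp_apply, letterWeight, e, Equiv.coe_fn_mk]
  push_cast
  rw [show (1 : ℤ) - (m + 2) = -((m : ℤ) + 1) by ring, zpow_neg, ← Nat.cast_succ, zpow_natCast,
    pow_succ]
  ring

noncomputable def cfPow (L : ℕ) (l : List {n : ℕ // 2 ≤ n}) : ℝ :=
  srcf (l.map fun n : {n : ℕ // 2 ≤ n} => ((n : ℕ) : ℝ)) ^ L

theorem two_le_of_mem_map_coe {l : List {n : ℕ // 2 ≤ n}} {x : ℝ}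
    (hx : x ∈ l.map fun n : {n : ℕ // 2 ≤ n} => ((n : ℕ) : ℝ)) : 2 ≤ x := by
  obtain ⟨n, -, rfl⟩ := List.mem_map.1 hx
  exact_mod_cast n.2

theorem cfPow_mem_Icc (L : ℕ) (l : List {n : ℕ // 2 ≤ n}) : cfPow L l ∈ Set.Icc 0 1 :=
  have h := srcf_mem_Ico fun _ => two_le_of_mem_map_coe
  ⟨pow_nonneg h.1 L, pow_le_one₀ h.1 h.2.le⟩

theorem cfPow_lt_cfPow_append_singleton {L : ℕ} (hL : L ≠ 0) (l : List {n : ℕ // 2 ≤ n})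
    (c : {n : ℕ // 2 ≤ n}) : cfPow L l < cfPow L (l ++ [c]) := by
  have hl : ∀ x ∈ l.map fun n : {n : ℕ // 2 ≤ n} => ((n : ℕ) : ℝ), 2 ≤ x :=
    fun _ => two_le_of_mem_map_coe
  rw [cfPow, cfPow, List.map_append, List.map_singleton]
  exact pow_lt_pow_left₀ (srcf_lt_srcf_append_singleton hl (by exact_mod_cast c.2))
    (srcf_mem_Ico hl).1 hL

theorem Aseq_summand_eq (L ℓ : ℕ) :
    (fun b : Fin ℓ → {n : ℕ // 2 ≤ n} =>
      (2 : ℝ) ^ ((ℓ : ℤ) - ∑ i, ((b i : ℕ) : ℤ)) *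
        (srcf (List.ofFn fun i => ((b i : ℕ) : ℝ))) ^ L) =
      fun b => (∏ i, letterWeight (b i)) * cfPow L (List.ofFn b) := by
  ext b
  rw [two_zpow_sub_sum_eq_prod, cfPow, List.map_ofFn]
  rfl

theorem Aseq_eq_wordMean (L ℓ : ℕ) : Aseq L ℓ = wordMean letterWeight (cfPow L) ℓ :=
  congrArg tsum (Aseq_summand_eq L ℓ)

/-- Each `A_ℓ = ∑_{b₁,…,b_ℓ ≥ 2} 2^{ℓ−(b₁+⋯+b_ℓ)}[[b₁,…,b_ℓ]]^L` converges (the series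
is summable), `0 ≤ A_ℓ ≤ 1`, and `(A_ℓ)` is strictly increasing for `ℓ ≥ 1`. -/
theorem Aseq_summable_bounded_strictMono (L : ℕ) (hL : 1 ≤ L) :
    (∀ ℓ : ℕ, Summable fun b : Fin ℓ → {n : ℕ // 2 ≤ n} =>
      (2 : ℝ) ^ ((ℓ : ℤ) - ∑ i, ((b i : ℕ) : ℤ)) *
        (srcf (List.ofFn fun i => ((b i : ℕ) : ℝ))) ^ L) ∧
    (∀ ℓ : ℕ, 0 ≤ Aseq L ℓ ∧ Aseq L ℓ ≤ 1) ∧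
    (∀ ℓ : ℕ, 1 ≤ ℓ → Aseq L ℓ < Aseq L (ℓ + 1)) := by
  have hw0 : ∀ n, 0 ≤ letterWeight n := fun n => (letterWeight_pos n).le
  refine ⟨fun ℓ => ?_, fun ℓ => ?_, fun ℓ _ => ?_⟩
  · rw [Aseq_summand_eq]
    exact summable_wordMean hw0 hasSum_letterWeight (cfPow_mem_Icc L) ℓ
  · rw [Aseq_eq_wordMean]
    exact wordMean_mem_Icc hw0 hasSum_letterWeight (cfPow_mem_Icc L) ℓ
  · rw [Aseq_eq_wordMean, Aseq_eq_wordMean]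
    exact wordMean_lt_wordMean_succ letterWeight_pos hasSum_letterWeight (cfPow_mem_Icc L)
      (cfPow_lt_cfPow_append_singleton (by omega)) ℓ
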